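/- Let Δ be a finite group, F a flasque Δ-lattice and P a permutation Δ-module. Then Ext^1_{ℤ[Δ]}(F, P) = 0; equivalently, every short exact sequence of Δ-modules 0 → P → E → F → 0 splits. -/

import Mathlib

/-!
STATEMENT 5: for a finite group Δ, a flasque Δ-lattice F and a permutation
Δ-module P, every short exact sequence of Δ-modules 0 → P → E → F → 0 splits
(i.e. Ext¹_{ℤ[Δ]}(F, P) = 0).
-/

open scoped BigOperators

/-- Ĥ^{-1}(Θ, X) = 0, expressed elementwise. -/
def TateHminusOneVanishes {Δ : Type*} [Group Δ] (Θ : Subgroup Δ) [Fintype Θ]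
    (X : Type*) [AddCommGroup X] [DistribMulAction Δ X] : Prop :=
  ∀ x : X, (∑ θ : Θ, (θ : Δ) • x) = 0 →
    x ∈ AddSubgroup.closure {z : X | ∃ (θ : Θ) (y : X), z = (θ : Δ) • y - y}

/-- A Δ-module is flasque if Ĥ^{-1}(Θ, X) = 0 for every subgroup Θ ≤ Δ. -/
def IsFlasque (Δ : Type*) [Group Δ] (X : Type*) [AddCommGroup X]
    [DistribMulAction Δ X] : Prop :=
  ∀ (Θ : Subgroup Δ) (_ : Fintype Θ), TateHminusOneVanishes Θ X

/-- A permutation Δ-module: a finitely generated module with a Δ-stable ℤ-basis. -/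
def IsPermutationModule (Δ : Type*) [Group Δ] (X : Type*) [AddCommGroup X]
    [DistribMulAction Δ X] : Prop :=
  ∃ (ι : Type) (_ : Finite ι) (b : Module.Basis ι ℤ X), ∀ (δ : Δ) (i : ι), ∃ j : ι, δ • b i = b j

/-- A Δ-equivariant additive homomorphism. -/
def IsEquivariant (Δ : Type*) [Group Δ] {X Y : Type*} [AddCommGroup X] [AddCommGroup Y]
    [DistribMulAction Δ X] [DistribMulAction Δ Y] (φ : X →+ Y) : Prop :=
  ∀ (δ : Δ) (x : X), φ (δ • x) = δ • φ x

/-!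
An equivariant section of `p` amounts to an equivariant retraction `E → P`. As `P` is a
permutation module, Frobenius reciprocity reduces this to finding, for every basis vector `bᵢ`
with stabilizer `Θ`, a `Θ`-invariant functional on `E` extending the coordinate `bᵢ*` of `P`.
Since `F` is free, `bᵢ*` has a `ℤ`-linear extension `φ`, whose failure to be `Θ`-invariant is a
1-cocycle `d : Θ → Hom(F, ℤ)`; so it suffices that `H¹(Θ, Hom(F, ℤ)) = 0`.

With `n = |Θ|`, averaging gives `n • d = δh` for `h = -∑ τ, d τ`, so `h mod n` is `Θ`-invariant
and factors through the coinvariants `F ⧸ I_Θ F`. Flasqueness says precisely that these are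
torsion-free (the norm kills `I_Θ F`, and `F` is torsion-free), hence free, so `h ≡ k mod n` for
an invariant `k`, and then `d = δ((h - k) / n)`.
-/

theorem AddMonoidHom.exists_eq_mul_add_of_forall_dvd {A : Type*} [AddCommGroup A]
    (S : AddSubgroup A) [Module.Projective ℤ (A ⧸ S)] (n : ℤ) (h : A →+ ℤ)
    (hS : ∀ s ∈ S, n ∣ h s) :
    ∃ f k : A →+ ℤ, S ≤ k.ker ∧ ∀ a, h a = n * f a + k a := by
  let modN := QuotientAddGroup.mk' (AddSubgroup.zmultiples n)
  have hmodN : ∀ m, modN m = 0 ↔ n ∣ m := fun m => by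
    rw [QuotientAddGroup.mk'_apply, QuotientAddGroup.eq_zero_iff, Int.mem_zmultiples_iff]
  let hbar : A ⧸ S →+ ℤ ⧸ AddSubgroup.zmultiples n :=
    QuotientAddGroup.lift S (modN.comp h) fun s hs => (hmodN _).mpr (hS s hs)
  obtain ⟨kbar, hkbar⟩ := Module.projective_lifting_property modN.toIntLinearMap
    hbar.toIntLinearMap (QuotientAddGroup.mk'_surjective _)
  let k : A →+ ℤ := kbar.toAddMonoidHom.comp (QuotientAddGroup.mk' S)
  have hdvd : ∀ a, n ∣ h a - k a := fun a => by
    rw [← hmodN, map_sub, sub_eq_zero]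
    exact (LinearMap.congr_fun hkbar (a : A ⧸ S)).symm
  refine ⟨AddMonoidHom.mk' (fun a => (h a - k a) / n) fun a b => ?_, k, fun s hs => ?_,
    fun a => ?_⟩
  · rw [map_add, map_add, add_sub_add_comm, Int.add_ediv_of_dvd_left (hdvd a)]
  · simp [k, (QuotientAddGroup.eq_zero_iff s).mpr hs]
  · simp [Int.mul_ediv_cancel' (hdvd a)]

section

variable {Δ : Type*} [Group Δ] (Θ : Subgroup Δ) (X : Type*) [AddCommGroup X]
  [DistribMulAction Δ X]

def augmentationSubgroup : AddSubgroup X :=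
  AddSubgroup.closure {z : X | ∃ (θ : Θ) (y : X), z = (θ : Δ) • y - y}

def normMap [Fintype Θ] : X →+ X :=
  ∑ θ : Θ, DistribSMul.toAddMonoidHom X (θ : Δ)

variable {Θ X}

theorem normMap_apply [Fintype Θ] (x : X) : normMap Θ X x = ∑ θ : Θ, (θ : Δ) • x := by
  simp [normMap]

theorem augmentationSubgroup_le_ker_normMap [Fintype Θ] :
    augmentationSubgroup Θ X ≤ (normMap Θ X).ker := by
  refine (AddSubgroup.closure_le _).mpr ?_
  rintro _ ⟨θ, y, rfl⟩
  have hshift : ∑ ρ : Θ, ((ρ * θ : Θ) : Δ) • y = ∑ ρ : Θ, (ρ : Δ) • y :=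
    Fintype.sum_equiv (Equiv.mulRight θ) _ _ fun _ => rfl
  simp only [SetLike.mem_coe, AddMonoidHom.mem_ker, map_sub, normMap_apply, smul_smul]
  rw [← hshift]
  simp

theorem TateHminusOneVanishes.isTorsionFree_quotient [Fintype Θ] [Module.IsTorsionFree ℤ X]
    (hΘ : TateHminusOneVanishes Θ X) :
    Module.IsTorsionFree ℤ (X ⧸ augmentationSubgroup Θ X) := by
  refine .of_smul_eq_zero fun m q hmq => ?_
  induction q using QuotientAddGroup.induction_on with | H x => ?_
  rw [← QuotientAddGroup.mk_zsmul, QuotientAddGroup.eq_zero_iff] at hmq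
  have hnorm : m • normMap Θ X x = 0 := by
    rw [← map_zsmul]; exact augmentationSubgroup_le_ker_normMap hmq
  refine (smul_eq_zero.mp hnorm).imp id fun hx => ?_
  rw [normMap_apply] at hx
  exact (QuotientAddGroup.eq_zero_iff x).mpr (hΘ x hx)

end

section

variable {Δ : Type*} [Group Δ] {Θ : Subgroup Δ} [Fintype Θ]
  {P E F : Type*} [AddCommGroup P] [AddCommGroup E] [AddCommGroup F]
  [DistribMulAction Δ P] [DistribMulAction Δ E] [DistribMulAction Δ F]

theorem TateHminusOneVanishes.exists_coboundary [Module.IsTorsionFree ℤ F] [Module.Finite ℤ F]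
    (hΘ : TateHminusOneVanishes Θ F) (d : Θ → F →+ ℤ)
    (hd : ∀ θ τ y, d (θ * τ) y = d θ ((τ : Δ) • y) + d τ y) :
    ∃ f : F →+ ℤ, ∀ θ y, d θ y = f ((θ : Δ) • y) - f y := by
  set n : ℤ := (Fintype.card Θ : ℤ) with hn
  let h : F →+ ℤ := -∑ τ, d τ
  have hh : ∀ θ y, n * d θ y = h ((θ : Δ) • y) - h y := by
    intro θ y
    have hshift : ∑ τ : Θ, d (τ * θ) y = ∑ τ, d τ y :=
      Fintype.sum_equiv (Equiv.mulRight θ) _ _ fun _ => rfl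
    have hsum : ∑ τ, d τ ((θ : Δ) • y) = ∑ τ, d τ y - n * d θ y := by
      simp [← hshift, hd, Finset.sum_add_distrib, hn]
    simp [h, AddMonoidHom.finsetSum_apply, hsum]
  have hdvd : ∀ s ∈ augmentationSubgroup Θ F, n ∣ h s := by
    suffices augmentationSubgroup Θ F ≤ (AddSubgroup.zmultiples n).comap h from
      fun s hs => Int.mem_zmultiples_iff.mp (this hs)
    refine (AddSubgroup.closure_le _).mpr ?_
    rintro _ ⟨θ, y, rfl⟩
    simp [Int.mem_zmultiples_iff, ← hh]
  have := hΘ.isTorsionFree_quotient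
  have : Module.Finite ℤ (F ⧸ augmentationSubgroup Θ F) :=
    .of_surjective (QuotientAddGroup.mk' _).toIntLinearMap (QuotientAddGroup.mk'_surjective _)
  obtain ⟨f, k, hk, hhfk⟩ := h.exists_eq_mul_add_of_forall_dvd _ n hdvd
  have hn0 : n ≠ 0 := Nat.cast_ne_zero.mpr Fintype.card_ne_zero
  refine ⟨f, fun θ y => mul_left_cancel₀ hn0 ?_⟩
  have hk0 : k ((θ : Δ) • y - y) = 0 := hk (AddSubgroup.subset_closure ⟨θ, y, rfl⟩)
  rw [hh, hhfk, hhfk]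
  rw [map_sub] at hk0
  linarith


theorem TateHminusOneVanishes.exists_invariant_sub_comp [Module.IsTorsionFree ℤ F]
    [Module.Finite ℤ F] (hΘ : TateHminusOneVanishes Θ F) {p : E →+ F} (hp : IsEquivariant Δ p)
    {σ : F →+ E} (hσ : ∀ y, p (σ y) = y) (φ : E →+ ℤ)
    (hφ : ∀ (θ : Θ) e, p e = 0 → φ ((θ : Δ) • e) = φ e) :
    ∃ f : F →+ ℤ, ∀ (θ : Θ) e, (φ - f.comp p) ((θ : Δ) • e) = (φ - f.comp p) e := by
  let d : Θ → F →+ ℤ := fun θ =>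
    φ.comp ((DistribSMul.toAddMonoidHom E (θ : Δ)).comp σ) - φ.comp σ
  have hd_apply : ∀ θ y, d θ y = φ ((θ : Δ) • σ y) - φ (σ y) := fun _ _ => rfl
  -- `φ` is `Θ`-invariant on `ker p ∋ e - σ (p e)`
  have hdp : ∀ θ e, d θ (p e) = φ ((θ : Δ) • e) - φ e := by
    intro θ e
    have hker := hφ θ (e - σ (p e)) (by rw [map_sub, hσ, sub_self])
    rw [smul_sub, map_sub, map_sub] at hker
    rw [hd_apply]
    linarith
  have hd : ∀ θ τ y, d (θ * τ) y = d θ ((τ : Δ) • y) + d τ y := by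
    intro θ τ y
    have hτy : (τ : Δ) • y = p ((τ : Δ) • σ y) := by rw [hp, hσ]
    rw [hτy, hdp, hd_apply, hd_apply, Subgroup.coe_mul, mul_smul]
    ring
  obtain ⟨f, hf⟩ := hΘ.exists_coboundary d hd
  refine ⟨f, fun θ e => ?_⟩
  have := hdp θ e
  rw [hf] at this
  simp only [AddMonoidHom.sub_apply, AddMonoidHom.comp_apply]
  rw [hp]
  linarith

theorem TateHminusOneVanishes.exists_invariant_extension [Module.IsTorsionFree ℤ F]
    [Module.Finite ℤ F] (hΘ : TateHminusOneVanishes Θ F) {ι : P →+ E} (hι : IsEquivariant Δ ι)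
    (hinj : Function.Injective ι) {p : E →+ F} (hp : IsEquivariant Δ p)
    (hexact : Function.Exact ι p) {σ : F →+ E} (hσ : ∀ y, p (σ y) = y) (φ : P →+ ℤ)
    (hφ : ∀ (θ : Θ) q, φ ((θ : Δ) • q) = φ q) :
    ∃ lam : E →+ ℤ, (∀ (θ : Θ) e, lam ((θ : Δ) • e) = lam e) ∧ ∀ q, lam (ι q) = φ q := by
  have hsection : ∃ l : F →ₗ[ℤ] E, p.toIntLinearMap ∘ₗ l = .id :=
    ⟨σ.toIntLinearMap, LinearMap.ext hσ⟩
  obtain ⟨ρ, hρ⟩ : ∃ ρ : E →ₗ[ℤ] P, ρ ∘ₗ ι.toIntLinearMap = .id :=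
    ((Function.Exact.split_tfae (f := ι.toIntLinearMap) (g := p.toIntLinearMap) hexact hinj
      fun y => ⟨σ y, hσ y⟩).out 0 1).mp hsection
  have hρι : ∀ q, ρ (ι q) = q := LinearMap.congr_fun hρ
  obtain ⟨f, hf⟩ := hΘ.exists_invariant_sub_comp hp hσ (φ.comp ρ.toAddMonoidHom) fun θ e he => by
    obtain ⟨q, rfl⟩ := (hexact e).mp he
    simp only [AddMonoidHom.comp_apply, LinearMap.toAddMonoidHom_coe]
    rw [← hι, hρι, hρι, hφ]
  exact ⟨_, hf, fun q => by simp [hρι, hexact.apply_apply_eq_zero]⟩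

end

section

variable {Δ : Type*} [Group Δ] {P E F : Type*} [AddCommGroup P] [AddCommGroup E] [AddCommGroup F]
  [DistribMulAction Δ P] [DistribMulAction Δ E] [DistribMulAction Δ F]

theorem IsPermutationModule.exists_equivariant_basis (hP : IsPermutationModule Δ P) :
    ∃ (κ : Type) (_ : Fintype κ) (_ : MulAction Δ κ) (b : Module.Basis κ ℤ P),
      ∀ (δ : Δ) i, b (δ • i) = δ • b i := by
  obtain ⟨κ, _, b, hb⟩ := hP
  choose π hπ using hb
  let _ : MulAction Δ κ :=
    { smul := π
      one_smul := fun i => b.injective (show b (π 1 i) = b i by rw [← hπ, one_smul])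
      mul_smul := fun δ ε i => b.injective (show b (π (δ * ε) i) = b (π δ (π ε i)) by
        rw [← hπ, ← hπ, ← hπ, mul_smul]) }
  exact ⟨κ, Fintype.ofFinite κ, ‹_›, b, fun δ i => (hπ δ i).symm⟩

variable {κ : Type*} [MulAction Δ κ] {b : Module.Basis κ ℤ P}

theorem Module.Basis.coord_smul_smul (hb : ∀ (δ : Δ) i, b (δ • i) = δ • b i) (δ : Δ) (i : κ)
    (q : P) : b.coord (δ • i) (δ • q) = b.coord i q := by
  let act : P →ₗ[ℤ] P := (DistribSMul.toAddMonoidHom P δ).toIntLinearMap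
  suffices (b.coord (δ • i)).comp act = b.coord i from LinearMap.congr_fun this q
  refine b.ext fun k => ?_
  simp [act, ← hb, Finsupp.single_apply_left (MulAction.injective δ)]

/-- Frobenius reciprocity, made explicit by transporting along chosen orbit representatives. -/
theorem exists_equivariant_family_of_stabilizer_invariant
    (hb : ∀ (δ : Δ) i, b (δ • i) = δ • b i) {ι : P →+ E} (hι : IsEquivariant Δ ι)
    (lam : κ → E →+ ℤ) (hinv : ∀ i, ∀ δ ∈ MulAction.stabilizer Δ i, ∀ e, lam i (δ • e) = lam i e)
    (hlam : ∀ i q, lam i (ι q) = b.coord i q) :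
    ∃ μ : κ → E →+ ℤ, (∀ (δ : Δ) i e, μ (δ • i) (δ • e) = μ i e) ∧
      ∀ i q, μ i (ι q) = b.coord i q := by
  let rep : κ → κ := fun i => (⟦i⟧ : MulAction.orbitRel.Quotient Δ κ).out
  have hrep_smul : ∀ (δ : Δ) i, rep (δ • i) = rep i := fun δ i =>
    congrArg Quotient.out (Quotient.sound (MulAction.mem_orbit i δ))
  have hrep_mem : ∀ i, ∃ g : Δ, g • i = rep i := fun i =>
    Quotient.mk_out (s := MulAction.orbitRel Δ κ) i
  choose g hg using hrep_mem
  refine ⟨fun i => (lam (rep i)).comp (DistribSMul.toAddMonoidHom E (g i)), ?_, ?_⟩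
  · intro δ i e
    have hstab : (g (δ • i) * δ * (g i)⁻¹) • rep i = rep i :=
      calc _ = g (δ • i) • δ • (g i)⁻¹ • g i • i := by rw [mul_smul, mul_smul, hg]
        _ = rep i := by rw [inv_smul_smul, hg, hrep_smul]
    have hshift : g (δ • i) • δ • e = (g (δ • i) * δ * (g i)⁻¹) • g i • e := by
      rw [smul_smul, smul_smul, inv_mul_cancel_right]
    simp only [AddMonoidHom.comp_apply, DistribSMul.toAddMonoidHom_apply, hrep_smul]
    rw [hshift, hinv _ _ hstab]
  · intro i q
    simp only [AddMonoidHom.comp_apply, DistribSMul.toAddMonoidHom_apply]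
    rw [← hι, hlam, ← hg, b.coord_smul_smul hb]

theorem exists_equivariant_retraction_of_equivariant_family [Fintype κ]
    (hb : ∀ (δ : Δ) i, b (δ • i) = δ • b i) {ι : P →+ E} (μ : κ → E →+ ℤ) (hμ : ∀ (δ : Δ) i e, μ (δ • i) (δ • e) = μ i e)
    (hμι : ∀ i q, μ i (ι q) = b.coord i q) :
    ∃ r : E →+ P, IsEquivariant Δ r ∧ ∀ q, r (ι q) = q := by
  let r : E →+ P :=
    (b.equivFun.symm.toLinearMap ∘ₗ LinearMap.pi fun i => (μ i).toIntLinearMap).toAddMonoidHom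
  have hr : ∀ e, r e = ∑ i, μ i e • b i := fun e => b.equivFun_symm_apply _
  refine ⟨r, fun δ e => ?_, fun q => ?_⟩
  · rw [hr, hr, Finset.smul_sum]
    refine (Fintype.sum_equiv (MulAction.toPerm δ) _ _ fun j => ?_).symm
    rw [MulAction.toPerm_apply, hμ, hb, smul_comm]
  · simp only [hr, hμι, Module.Basis.coord_apply, b.sum_repr]

theorem exists_equivariant_section_of_retraction {ι : P →+ E} (hι : IsEquivariant Δ ι)
    {p : E →+ F} (hp : IsEquivariant Δ p) (hexact : Function.Exact ι p) {σ : F →+ E}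
    (hσ : ∀ y, p (σ y) = y) {r : E →+ P} (hr : IsEquivariant Δ r) (hrι : ∀ q, r (ι q) = q) :
    ∃ s : F →+ E, IsEquivariant Δ s ∧ p.comp s = AddMonoidHom.id F := by
  refine ⟨σ - ι.comp (r.comp σ), fun δ y => ?_, AddMonoidHom.ext fun y => ?_⟩
  · obtain ⟨q, hq⟩ := (hexact (σ (δ • y) - δ • σ y)).mp (by rw [map_sub, hσ, hp, hσ, sub_self])
    have hσδ : σ (δ • y) = δ • σ y + ι q := by rw [hq]; abel
    simp only [AddMonoidHom.sub_apply, AddMonoidHom.comp_apply]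
    rw [hσδ, map_add, hr, hrι, map_add, hι, smul_sub]
    abel
  · simp [hσ, hexact.apply_apply_eq_zero]

end

theorem ext_flasque_permutation_vanishes (Δ : Type) [Group Δ] [Finite Δ]
    (F P E : Type) [AddCommGroup F] [AddCommGroup P] [AddCommGroup E]
    [DistribMulAction Δ F] [DistribMulAction Δ P] [DistribMulAction Δ E]
    (hFfree : Module.Free ℤ F) (hFfg : Module.Finite ℤ F) (hF : IsFlasque Δ F)
    (hP : IsPermutationModule Δ P)
    (ι : P →+ E) (hι : IsEquivariant Δ ι) (hinj : Function.Injective ι)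
    (p : E →+ F) (hp : IsEquivariant Δ p) (hsurj : Function.Surjective p)
    (hexact : Function.Exact ι p) :
    ∃ s : F →+ E, IsEquivariant Δ s ∧ p.comp s = AddMonoidHom.id F := by
  obtain ⟨κ, _, _, b, hb⟩ := hP.exists_equivariant_basis
  obtain ⟨σ, hσ⟩ : ∃ σ : F →+ E, ∀ y, p (σ y) = y :=
    let ⟨σ, hσ⟩ := Module.projective_lifting_property p.toIntLinearMap .id hsurj
    ⟨σ.toAddMonoidHom, LinearMap.congr_fun hσ⟩
  have hlam : ∀ i : κ, ∃ lam : E →+ ℤ,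
      (∀ δ ∈ MulAction.stabilizer Δ i, ∀ e, lam (δ • e) = lam e) ∧
        ∀ q, lam (ι q) = b.coord i q := by
    intro i
    have := Fintype.ofFinite (MulAction.stabilizer Δ i)
    obtain ⟨lam, hinv, hext⟩ := (hF _ this).exists_invariant_extension hι hinj hp hexact hσ
      (b.coord i).toAddMonoidHom
      fun θ q => by simpa [MulAction.mem_stabilizer_iff.mp θ.2] using b.coord_smul_smul hb θ i q
    exact ⟨lam, fun δ hδ => hinv ⟨δ, hδ⟩, hext⟩
  choose lam hlam_inv hlam_ι using hlam
  obtain ⟨μ, hμ, hμι⟩ :=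
    exists_equivariant_family_of_stabilizer_invariant hb hι lam hlam_inv hlam_ι
  obtain ⟨r, hr, hrι⟩ := exists_equivariant_retraction_of_equivariant_family hb μ hμ hμι
  exact exists_equivariant_section_of_retraction hι hp hexact hσ hr hrι
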